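/- arXiv:2511.02329 — 3 statements merged into one kernel-verified Lean document; each statement's English description precedes it below -/
import Mathlib

section
/- Let u, v, u*, v*, w be unit vectors in ℝ³ with ‖u − u*‖ ≤ δ₁, ‖v − v*‖ ≤ δ₂, and suppose (u* × v*)·w = 0 and |u·v| ≤ cos α for some α ∈ (0, π/2). Then |(u × v)·w| / sin(angle between u and v) ≤ (δ₁ + δ₂)/sin α. -/
open scoped RealInnerProductSpace

/-- Scalar triple product `(u × v) ⬝ w` of vectors in `EuclideanSpace ℝ (Fin 3)`. -/
noncomputable def tripleProduct (u v w : EuclideanSpace ℝ (Fin 3)) : ℝ :=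
  ⟪(WithLp.equiv 2 (Fin 3 → ℝ)).symm
      (crossProduct (WithLp.equiv 2 (Fin 3 → ℝ) u) (WithLp.equiv 2 (Fin 3 → ℝ) v)), w⟫

lemma tp_eq (a b w : EuclideanSpace ℝ (Fin 3)) :
    tripleProduct a b w = (a 1 * b 2 - a 2 * b 1) * w 0 + (a 2 * b 0 - a 0 * b 2) * w 1 + (a 0 * b 1 - a 1 * b 0) * w 2 := by
  simp [tripleProduct, PiLp.inner_apply, crossProduct, Fin.sum_univ_three, Matrix.cons_val_zero, Matrix.cons_val_one, Matrix.head_cons, Matrix.cons_val_two, Matrix.tail_cons]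
  ring

lemma tp_add (u v us vs w : EuclideanSpace ℝ (Fin 3)) :
    tripleProduct u v w = tripleProduct (u - us) v w + tripleProduct us (v - vs) w + tripleProduct us vs w := by
  simp only [tp_eq, PiLp.sub_apply]
  ring

lemma norm_sq3 (a : EuclideanSpace ℝ (Fin 3)) : ‖a‖^2 = a 0^2 + a 1^2 + a 2^2 := by
  rw [← real_inner_self_eq_norm_sq]
  simp only [PiLp.inner_apply, Fin.sum_univ_three, RCLike.inner_apply, conj_trivial]
  ring

lemma tp_bound (a b w : EuclideanSpace ℝ (Fin 3)) :
    |tripleProduct a b w| ≤ ‖a‖ * ‖b‖ * ‖w‖ := by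
  have key : (tripleProduct a b w)^2 ≤ (‖a‖ * ‖b‖ * ‖w‖)^2 := by
    rw [tp_eq]
    have ha := norm_sq3 a
    have hb := norm_sq3 b
    have hw := norm_sq3 w
    have hcs : ((a 1 * b 2 - a 2 * b 1) * w 0 + (a 2 * b 0 - a 0 * b 2) * w 1 + (a 0 * b 1 - a 1 * b 0) * w 2)^2
        ≤ ((a 1 * b 2 - a 2 * b 1)^2 + (a 2 * b 0 - a 0 * b 2)^2 + (a 0 * b 1 - a 1 * b 0)^2) * (w 0^2 + w 1^2 + w 2^2) := by
      nlinarith [sq_nonneg ((a 1 * b 2 - a 2 * b 1) * w 1 - (a 2 * b 0 - a 0 * b 2) * w 0),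
        sq_nonneg ((a 1 * b 2 - a 2 * b 1) * w 2 - (a 0 * b 1 - a 1 * b 0) * w 0),
        sq_nonneg ((a 2 * b 0 - a 0 * b 2) * w 2 - (a 0 * b 1 - a 1 * b 0) * w 1)]
    have hlag : (a 1 * b 2 - a 2 * b 1)^2 + (a 2 * b 0 - a 0 * b 2)^2 + (a 0 * b 1 - a 1 * b 0)^2
        ≤ (a 0^2 + a 1^2 + a 2^2) * (b 0^2 + b 1^2 + b 2^2) := by
      nlinarith [sq_nonneg (a 0 * b 0 + a 1 * b 1 + a 2 * b 2)]
    calc _ ≤ ((a 1 * b 2 - a 2 * b 1)^2 + (a 2 * b 0 - a 0 * b 2)^2 + (a 0 * b 1 - a 1 * b 0)^2) * (w 0^2 + w 1^2 + w 2^2) := hcs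
      _ ≤ (a 0^2 + a 1^2 + a 2^2) * (b 0^2 + b 1^2 + b 2^2) * (w 0^2 + w 1^2 + w 2^2) := by
          apply mul_le_mul_of_nonneg_right hlag
          positivity
      _ = (‖a‖ * ‖b‖ * ‖w‖)^2 := by rw [mul_pow, mul_pow, ha, hb, hw]
  have h0 : (0:ℝ) ≤ ‖a‖ * ‖b‖ * ‖w‖ := by positivity
  have := abs_le_abs (a := tripleProduct a b w) (b := ‖a‖ * ‖b‖ * ‖w‖)
  rw [← Real.sqrt_sq (abs_nonneg (tripleProduct a b w)), ← Real.sqrt_sq h0, sq_abs]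
  exact Real.sqrt_le_sqrt key

theorem normalized_triple_product_perturbation (u v us vs w : EuclideanSpace ℝ (Fin 3))
    (hu : ‖u‖ = 1) (hv : ‖v‖ = 1) (hus : ‖us‖ = 1) (hvs : ‖vs‖ = 1) (hw : ‖w‖ = 1)
    (δ₁ δ₂ α : ℝ) (h1 : ‖u - us‖ ≤ δ₁) (h2 : ‖v - vs‖ ≤ δ₂)
    (hcop : tripleProduct us vs w = 0)
    (hα : α ∈ Set.Ioo 0 (Real.pi / 2))
    (hang : |(⟪u, v⟫ : ℝ)| ≤ Real.cos α) :
    |tripleProduct u v w| / Real.sin (InnerProductGeometry.angle u v) ≤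
      (δ₁ + δ₂) / Real.sin α := by
  obtain ⟨hα0, hα2⟩ := hα
  have hαπ : α ≤ Real.pi := by linarith [Real.pi_pos]
  have hsinα : 0 < Real.sin α :=
    Real.sin_pos_of_pos_of_lt_pi hα0 (by linarith [Real.pi_pos])
  have hT : |tripleProduct u v w| ≤ δ₁ + δ₂ := by
    rw [tp_add u v us vs w, hcop, add_zero]
    calc |tripleProduct (u - us) v w + tripleProduct us (v - vs) w|
        ≤ |tripleProduct (u - us) v w| + |tripleProduct us (v - vs) w| := abs_add_le _ _
      _ ≤ ‖u - us‖ * ‖v‖ * ‖w‖ + ‖us‖ * ‖v - vs‖ * ‖w‖ :=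
          add_le_add (tp_bound _ _ _) (tp_bound _ _ _)
      _ ≤ δ₁ + δ₂ := by rw [hv, hw, hus]; simpa using add_le_add h1 h2
  have hsin : Real.sin α ≤ Real.sin (InnerProductGeometry.angle u v) := by
    rw [InnerProductGeometry.angle, hu, hv, mul_one, div_one, Real.sin_arccos]
    rw [Real.sin_eq_sqrt_one_sub_cos_sq hα0.le hαπ]
    apply Real.sqrt_le_sqrt
    obtain ⟨hl, hr⟩ := abs_le.mp hang
    nlinarith [sq_abs (⟪u, v⟫ : ℝ)]
  exact div_le_div₀ (by linarith [norm_nonneg (u - us), norm_nonneg (v - vs)]) hT hsinα hsin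
end

section
/- Let N be a finite nonempty set partitioned as N = G ∪ B with G nonempty, let β > 0, μ > 0, C > 0, and let (s_k)_{k∈N}, (s_k*)_{k∈N}, (d_k)_{k∈N} be nonnegative reals such that: d_k = 0 for k ∈ G; d_k ≤ C·s_k* for k ∈ B; s_k ≥ (μ/e)·s_k* for all k; and s_k ≤ 1/(2β) for all k ∈ G. Then (Σ_{k∈N} e^{-β s_k} d_k)/(Σ_{k∈N} e^{-β s_k}) ≤ (|B|/|G|)·(e·C)/(β·μ). -/
lemma key_xexp (β x : ℝ) (hβ : 0 < β) (hx : 0 ≤ x) :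
    x * Real.exp (-(β * x)) ≤ 1 / (β * Real.exp 1) := by
  have h1 : β * x + 1 ≤ Real.exp (β * x) := Real.add_one_le_exp _
  have h2 : β * x ≤ Real.exp (β * x - 1) := by
    have := Real.add_one_le_exp (β * x - 1)
    linarith
  have h3 : β * x * Real.exp (-(β * x)) ≤ Real.exp (-1 : ℝ) := by
    calc β * x * Real.exp (-(β * x)) ≤ Real.exp (β * x - 1) * Real.exp (-(β * x)) := by
          apply mul_le_mul_of_nonneg_right h2 (Real.exp_nonneg _)
      _ = Real.exp (-1 : ℝ) := by rw [← Real.exp_add]; ring_nf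
  have he : Real.exp (-1 : ℝ) = 1 / Real.exp 1 := by
    rw [Real.exp_neg]; ring
  rw [he] at h3
  have hβe : 0 < β * Real.exp 1 := mul_pos hβ (Real.exp_pos 1)
  have h4 : β * x * Real.exp (-(β * x)) * Real.exp 1 ≤ 1 := by
    have h5 := mul_le_mul_of_nonneg_right h3 (Real.exp_pos 1).le
    rwa [one_div, inv_mul_cancel₀ (Real.exp_pos 1).ne'] at h5
  rw [le_div_iff₀ hβe]
  nlinarith [h4]

theorem good_edge_induction_step {ι : Type*} [DecidableEq ι]
    (N G B : Finset ι) (hGne : G.Nonempty)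
    (hdisj : Disjoint G B) (hunion : G ∪ B = N)
    (β μ C : ℝ) (hβ : 0 < β) (hμ : 0 < μ) (hC : 0 < C)
    (s ss d : ι → ℝ)
    (hs : ∀ k ∈ N, 0 ≤ s k) (hss : ∀ k ∈ N, 0 ≤ ss k) (hd : ∀ k ∈ N, 0 ≤ d k)
    (hG0 : ∀ k ∈ G, d k = 0)
    (hB : ∀ k ∈ B, d k ≤ C * ss k)
    (hlow : ∀ k ∈ N, (μ / Real.exp 1) * ss k ≤ s k)
    (hup : ∀ k ∈ G, s k ≤ 1 / (2 * β)) :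
    (∑ k ∈ N, Real.exp (-(β * s k)) * d k) / (∑ k ∈ N, Real.exp (-(β * s k))) ≤
      ((B.card : ℝ) / G.card) * (Real.exp 1 * C) / (β * μ) := by
  have hGsub : G ⊆ N := hunion ▸ Finset.subset_union_left
  have hBsub : B ⊆ N := hunion ▸ Finset.subset_union_right
  have he1 : (0:ℝ) < Real.exp 1 := Real.exp_pos 1
  -- numerator bound
  have hnum : (∑ k ∈ N, Real.exp (-(β * s k)) * d k) ≤ B.card * (C / (β * μ)) := by
    have hsplit : ∑ k ∈ N, Real.exp (-(β * s k)) * d k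
        = ∑ k ∈ B, Real.exp (-(β * s k)) * d k := by
      rw [← hunion, Finset.sum_union hdisj]
      have : ∑ k ∈ G, Real.exp (-(β * s k)) * d k = 0 :=
        Finset.sum_eq_zero fun k hk => by rw [hG0 k hk, mul_zero]
      rw [this, zero_add]
    rw [hsplit]
    have hcard : B.card * (C / (β * μ)) = ∑ _k ∈ B, C / (β * μ) := by
      rw [Finset.sum_const, nsmul_eq_mul]
    rw [hcard]
    apply Finset.sum_le_sum
    intro k hk
    have hkN := hBsub hk
    have h1 : d k ≤ C * ss k := hB k hk
    have h2 : ss k ≤ (Real.exp 1 / μ) * s k := by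
      have := hlow k hkN
      rw [div_mul_eq_mul_div, le_div_iff₀ hμ]
      have := hlow k hkN
      rw [div_mul_eq_mul_div, div_le_iff₀ he1] at this
      nlinarith
    have h3 : Real.exp (-(β * s k)) * d k ≤ C * ((Real.exp 1 / μ) * (s k * Real.exp (-(β * s k)))) := by
      have hexp : 0 ≤ Real.exp (-(β * s k)) := Real.exp_nonneg _
      calc Real.exp (-(β * s k)) * d k ≤ Real.exp (-(β * s k)) * (C * ((Real.exp 1 / μ) * s k)) := by
            apply mul_le_mul_of_nonneg_left _ hexp
            exact h1.trans (by nlinarith [hss k hkN])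
        _ = C * ((Real.exp 1 / μ) * (s k * Real.exp (-(β * s k)))) := by ring
    refine h3.trans ?_
    have hkey := key_xexp β (s k) hβ (hs k hkN)
    have : (Real.exp 1 / μ) * (s k * Real.exp (-(β * s k)))
        ≤ (Real.exp 1 / μ) * (1 / (β * Real.exp 1)) := by
      apply mul_le_mul_of_nonneg_left hkey (by positivity)
    refine (mul_le_mul_of_nonneg_left this hC.le).trans_eq ?_
    field_simp
  -- denominator bound
  have hden : (G.card : ℝ) / Real.exp 1 ≤ ∑ k ∈ N, Real.exp (-(β * s k)) := by
    have h1 : ∑ k ∈ G, Real.exp (-(β * s k)) ≤ ∑ k ∈ N, Real.exp (-(β * s k)) :=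
      Finset.sum_le_sum_of_subset_of_nonneg hGsub (fun k _ _ => Real.exp_nonneg _)
    refine le_trans ?_ h1
    have hcard : (G.card : ℝ) / Real.exp 1 = ∑ _k ∈ G, Real.exp (-1 : ℝ) := by
      rw [Finset.sum_const, nsmul_eq_mul, Real.exp_neg, div_eq_mul_inv]
    rw [hcard]
    apply Finset.sum_le_sum
    intro k hk
    apply Real.exp_le_exp.mpr
    have := hup k hk
    have hs' := hs k (hGsub hk)
    have : β * s k ≤ 1 / 2 := by
      rw [le_div_iff₀ (by positivity : (0:ℝ) < 2 * β)] at this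
      nlinarith
    linarith
  have hdenpos : 0 < ∑ k ∈ N, Real.exp (-(β * s k)) := by
    refine lt_of_lt_of_le ?_ hden
    have : 0 < (G.card : ℝ) := by exact_mod_cast Finset.card_pos.mpr hGne
    positivity
  have hGpos : 0 < (G.card : ℝ) := by exact_mod_cast Finset.card_pos.mpr hGne
  rw [div_le_iff₀ hdenpos]
  have hRHS : ((B.card : ℝ) / G.card) * (Real.exp 1 * C) / (β * μ) * ((G.card : ℝ) / Real.exp 1)
      = B.card * (C / (β * μ)) := by
    field_simp
  have hnn : 0 ≤ ((B.card : ℝ) / G.card) * (Real.exp 1 * C) / (β * μ) := by positivity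
  calc (∑ k ∈ N, Real.exp (-(β * s k)) * d k) ≤ B.card * (C / (β * μ)) := hnum
    _ = ((B.card : ℝ) / G.card) * (Real.exp 1 * C) / (β * μ) * ((G.card : ℝ) / Real.exp 1) := hRHS.symm
    _ ≤ _ := mul_le_mul_of_nonneg_left hden hnn
end

section
/- Under the hypotheses of the Cycle-Sync exact-recovery theorem (graph with good edges E_g and bad edges E_b; triangle angles θ_{ij,k} ∈ (α, π−α) for good cycles; λ = max_{ij} |B_{ij}|/|N_{ij}| bounding the fraction of bad cycles per edge; μ = min_{ij∈E_b} (Σ_{k∈G_{ij}} d̃_{ij,k})/(|G_{ij}| s̃*_{ij}); λ < 1 + eC_α/μ − √((eC_α/μ)(2 + eC_α/μ)) with C_α = 2(cos α + √(5−4cos²α))/sin²α; β₀ ≤ 1/(2λ), β_{t+1} = r·β_t with 1 < r < μ(1−λ)²/(2eC_αλ)), the iteratively reweighted AAB estimates s̃_{ij,t} defined by s̃_{ij,0} = (Σ_{k∈N_{ij}} d̃_{ij,k})/|N_{ij}| and s̃_{ij,t+1} = (Σ_{k∈N_{ij}} e^{−β_t(s̃_{ik,t}+s̃_{jk,t})}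 d̃_{ij,k})/(Σ_{k∈N_{ij}} e^{−β_t(s̃_{ik,t}+s̃_{jk,t})}) satisfy for all t ≥ 0: s̃_{ij,t} ≤ 1/(2β₀ r^t) for every ij ∈ E_g, and s̃_{ij,t} ≥ (μ/e)(1−λ)·s̃*_{ij} for every ij ∈ E_b. -/
set_option maxHeartbeats 1000000


open scoped RealInnerProductSpace

private lemma cemp_xexp_le (a x : ℝ) (ha : 0 < a) :
    x * Real.exp (-(a * x)) ≤ 1 / (Real.exp 1 * a) := by
  have key : a * x * Real.exp (-(a * x)) ≤ Real.exp (-1) := by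
    have h1 : a * x ≤ Real.exp (a * x - 1) := by
      have := Real.add_one_le_exp (a * x - 1)
      linarith
    calc a * x * Real.exp (-(a * x)) ≤ Real.exp (a * x - 1) * Real.exp (-(a * x)) :=
          mul_le_mul_of_nonneg_right h1 (Real.exp_pos _).le
      _ = Real.exp (-1) := by rw [← Real.exp_add]; ring_nf
  have h2 : Real.exp (-1) * Real.exp 1 = 1 := by rw [← Real.exp_add]; norm_num
  rw [le_div_iff₀ (by positivity)]
  nlinarith [mul_le_mul_of_nonneg_right key (Real.exp_pos 1).le, Real.exp_pos 1]

private lemma cemp_core_ineq (ex Cα μ lam r bt nc gc bc : ℝ)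
    (hex : 0 < ex) (hCα : 0 < Cα) (hμ : 0 < μ) (hlam0 : 0 < lam) (hlam1 : lam < 1)
    (hbt : 0 < bt) (hr : 1 < r) (hnc : 1 ≤ nc) (hgc : (1 - lam) * nc ≤ gc)
    (hbc : bc ≤ lam * nc)
    (hr2' : 2 * ex * Cα * lam * r ≤ μ * (1 - lam) ^ 2) :
    (bc * (Cα / (ex * (bt * (μ / ex * (1 - lam)))))) / (gc * ex⁻¹) ≤ 1 / (2 * (r * bt)) := by
  have h1l : 0 < 1 - lam := by linarith
  have hgc0 : 0 < gc := by nlinarith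
  rw [div_le_div_iff₀ (by positivity) (by positivity)]
  have key : 2 * r * Cα * ex * bc ≤ μ * (1 - lam) * gc := by
    nlinarith [mul_le_mul_of_nonneg_right hr2' (by linarith : (0:ℝ) ≤ nc),
      mul_le_mul_of_nonneg_left hbc (by positivity : (0:ℝ) ≤ 2 * r * Cα * ex),
      mul_le_mul_of_nonneg_left hgc (by positivity : (0:ℝ) ≤ μ * (1 - lam))]
  have key2 : 2 * r * Cα * bc ≤ μ * (1 - lam) * gc * ex⁻¹ := by
    calc 2 * r * Cα * bc = 2 * r * Cα * ex * bc * ex⁻¹ := by field_simp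
      _ ≤ μ * (1 - lam) * gc * ex⁻¹ :=
          mul_le_mul_of_nonneg_right key (by positivity)
  have hD : ex * (bt * (μ / ex * (1 - lam))) = bt * μ * (1 - lam) := by field_simp
  rw [hD]
  have hE : bc * (Cα / (bt * μ * (1 - lam))) * (2 * (r * bt))
      = 2 * r * Cα * bc / (μ * (1 - lam)) := by
    field_simp
  rw [hE, div_le_iff₀ (by positivity)]
  nlinarith [key2]

theorem cycle_sync_exact_recovery {V : Type*} [Fintype V] [DecidableEq V]
    (E Eg Eb : Finset (V × V)) (hpart : Eg ∪ Eb = E) (hdisj : Disjoint Eg Eb)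
    (γ γs : V → V → EuclideanSpace ℝ (Fin 3))
    (hunit : ∀ e ∈ E, ‖γ e.1 e.2‖ = 1 ∧ ‖γs e.1 e.2‖ = 1)
    (hclean : ∀ e ∈ Eg, γ e.1 e.2 = γs e.1 e.2)
    (N G B : V → V → Finset V)
    (hN : ∀ i j k, k ∈ N i j ↔ (i, k) ∈ E ∧ (j, k) ∈ E)
    (hG : ∀ i j k, k ∈ G i j ↔ k ∈ N i j ∧ (i, k) ∈ Eg ∧ (j, k) ∈ Eg)
    (hB : ∀ i j, B i j = N i j \ G i j)
    (hNne : ∀ e ∈ E, (N e.1 e.2).Nonempty)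
    (sstar : V → V → ℝ)
    (hsstar : ∀ i j, sstar i j = InnerProductGeometry.angle (γ i j) (γs i j) / Real.pi)
    (α lam μ r Cα : ℝ) (β : ℕ → ℝ)
    (hα : 0 < α) (hα2 : α < Real.pi / 2)
    (hCα : Cα = 2 * (Real.cos α + Real.sqrt (5 - 4 * Real.cos α ^ 2)) / Real.sin α ^ 2)
    (hangle : ∀ e ∈ Eg, ∀ k ∈ N e.1 e.2,
      α < InnerProductGeometry.angle (γ e.1 k) (γ e.2 k) ∧
        InnerProductGeometry.angle (γ e.1 k) (γ e.2 k) < Real.pi - α)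
    (d : V → V → V → ℝ)
    (hd01 : ∀ i j k, 0 ≤ d i j k ∧ d i j k ≤ 1)
    (hdG : ∀ e ∈ Eg, ∀ k ∈ G e.1 e.2, d e.1 e.2 k = 0)
    (hdbound : ∀ e ∈ Eg, ∀ k ∈ N e.1 e.2, d e.1 e.2 k ≤ Cα * (sstar e.1 k + sstar e.2 k))
    (hlampos : 0 < lam) (hlam1 : lam < 1) (hμpos : 0 < μ)
    (hlam : ∀ e ∈ E, ((B e.1 e.2).card : ℝ) ≤ lam * (N e.1 e.2).card)
    (hμ : ∀ e ∈ Eb, μ * (G e.1 e.2).card * sstar e.1 e.2 ≤ ∑ k ∈ G e.1 e.2, d e.1 e.2 k)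
    (hlamb : lam < 1 + Real.exp 1 * Cα / μ -
      Real.sqrt (Real.exp 1 * Cα / μ * (2 + Real.exp 1 * Cα / μ)))
    (hβ0pos : 0 < β 0) (hβ0 : β 0 ≤ 1 / (2 * lam))
    (hr1 : 1 < r) (hr2 : r < μ * (1 - lam) ^ 2 / (2 * Real.exp 1 * Cα * lam))
    (hβrec : ∀ t, β (t + 1) = r * β t)
    (s : ℕ → V → V → ℝ)
    (hs0 : ∀ e ∈ E, s 0 e.1 e.2 = (∑ k ∈ N e.1 e.2, d e.1 e.2 k) / (N e.1 e.2).card)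
    (hsrec : ∀ t, ∀ e ∈ E, s (t + 1) e.1 e.2 =
      (∑ k ∈ N e.1 e.2, Real.exp (-(β t * (s t e.1 k + s t e.2 k))) * d e.1 e.2 k) /
        (∑ k ∈ N e.1 e.2, Real.exp (-(β t * (s t e.1 k + s t e.2 k))))) :
    ∀ t : ℕ, (∀ e ∈ Eg, s t e.1 e.2 ≤ 1 / (2 * β 0 * r ^ t)) ∧
      (∀ e ∈ Eb, μ / Real.exp 1 * (1 - lam) * sstar e.1 e.2 ≤ s t e.1 e.2) := by
  -- Basic derived facts
  have hEgE : ∀ e ∈ Eg, e ∈ E := fun e he => by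
    rw [← hpart]; exact Finset.mem_union_left _ he
  have hEbE : ∀ e ∈ Eb, e ∈ E := fun e he => by
    rw [← hpart]; exact Finset.mem_union_right _ he
  have hsnn : ∀ i j, 0 ≤ sstar i j := fun i j => by
    rw [hsstar]
    exact div_nonneg (InnerProductGeometry.angle_nonneg _ _) Real.pi_pos.le
  have hs0star : ∀ e ∈ Eg, sstar e.1 e.2 = 0 := by
    intro e he
    have hne : γ e.1 e.2 ≠ 0 := by
      intro h
      have := (hunit e (hEgE e he)).1
      rw [h, norm_zero] at this; norm_num at this
    rw [hsstar, ← hclean e he, InnerProductGeometry.angle_self hne, zero_div]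
  have hCαpos : 0 < Cα := by
    rw [hCα]
    have hc : 0 < Real.cos α := Real.cos_pos_of_mem_Ioo ⟨by linarith, hα2⟩
    have hs : 0 < Real.sin α := Real.sin_pos_of_pos_of_lt_pi hα
      (by linarith [Real.pi_pos])
    positivity
  have hβpos : ∀ t, 0 < β t := by
    intro t
    induction t with
    | zero => exact hβ0pos
    | succ t ih => rw [hβrec]; exact mul_pos (by linarith) ih
  have hβform : ∀ t, β t = β 0 * r ^ t := by
    intro t
    induction t with
    | zero => simp
    | succ t ih => rw [hβrec, ih, pow_succ]; ring
  have he1 : (1:ℝ) ≤ Real.exp 1 := by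
    have := Real.add_one_le_exp 1; linarith
  have hexpos : (0:ℝ) < Real.exp 1 := Real.exp_pos 1
  have hcpos : 0 < μ / Real.exp 1 * (1 - lam) := by
    apply mul_pos (by positivity); linarith
  have hGN : ∀ i j, G i j ⊆ N i j := fun i j k hk => ((hG i j k).1 hk).1
  have hnc1 : ∀ e ∈ E, (1:ℝ) ≤ (N e.1 e.2).card := by
    intro e he
    exact_mod_cast Nat.one_le_iff_ne_zero.2 (Finset.card_ne_zero_of_mem (hNne e he).choose_spec)
  have hcardG : ∀ e ∈ E, (1 - lam) * (N e.1 e.2).card ≤ ((G e.1 e.2).card : ℝ) := by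
    intro e he
    have h1 := hlam e he
    rw [hB, Finset.card_sdiff_of_subset (hGN _ _),
      Nat.cast_sub (Finset.card_le_card (hGN _ _))] at h1
    linarith
  have hr2' : 2 * Real.exp 1 * Cα * lam * r ≤ μ * (1 - lam) ^ 2 := by
    have hpos : 0 < 2 * Real.exp 1 * Cα * lam := by positivity
    rw [lt_div_iff₀ hpos] at hr2
    nlinarith
  set c : ℝ := μ / Real.exp 1 * (1 - lam) with hc
  suffices H : ∀ t, (∀ e ∈ E, 0 ≤ s t e.1 e.2) ∧
      (∀ e ∈ Eg, s t e.1 e.2 ≤ 1 / (2 * β 0 * r ^ t)) ∧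
      (∀ e ∈ Eb, c * sstar e.1 e.2 ≤ s t e.1 e.2) from
    fun t => ⟨(H t).2.1, (H t).2.2⟩
  intro t
  induction t with
  | zero =>
    refine ⟨?_, ?_, ?_⟩
    · intro e he
      rw [hs0 e he]
      exact div_nonneg (Finset.sum_nonneg fun k _ => (hd01 _ _ _).1) (Nat.cast_nonneg _)
    · intro e he
      have heE := hEgE e he
      have hncpos : (0:ℝ) < (N e.1 e.2).card := by linarith [hnc1 e heE]
      rw [hs0 e heE, div_le_iff₀ hncpos]
      have hsplit := Finset.sum_sdiff (hGN e.1 e.2) (f := d e.1 e.2)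
      have hzero : ∑ k ∈ G e.1 e.2, d e.1 e.2 k = 0 :=
        Finset.sum_eq_zero (hdG e he)
      have hbsum : ∑ k ∈ N e.1 e.2 \ G e.1 e.2, d e.1 e.2 k
          ≤ ((N e.1 e.2 \ G e.1 e.2).card : ℝ) := by
        calc ∑ k ∈ N e.1 e.2 \ G e.1 e.2, d e.1 e.2 k
            ≤ ∑ _k ∈ N e.1 e.2 \ G e.1 e.2, (1:ℝ) :=
              Finset.sum_le_sum fun k _ => (hd01 _ _ _).2
          _ = _ := by simp
      have hbcard : ((N e.1 e.2 \ G e.1 e.2).card : ℝ) ≤ lam * (N e.1 e.2).card := by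
        have := hlam e heE; rwa [hB] at this
      have hlamle : lam ≤ 1 / (2 * β 0) := by
        rw [le_div_iff₀ (by positivity)]
        rw [le_div_iff₀ (by positivity)] at hβ0
        nlinarith
      simp only [pow_zero, mul_one]
      nlinarith [hncpos]
    · intro e he
      have heE := hEbE e he
      have hncpos : (0:ℝ) < (N e.1 e.2).card := by linarith [hnc1 e heE]
      rw [hs0 e heE, le_div_iff₀ hncpos]
      have hμe := hμ e he
      have h1 : ∑ k ∈ G e.1 e.2, d e.1 e.2 k ≤ ∑ k ∈ N e.1 e.2, d e.1 e.2 k :=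
        Finset.sum_le_sum_of_subset_of_nonneg (hGN _ _) fun k _ _ => (hd01 _ _ _).1
      have hgcard := hcardG e heE
      have hsnn' := hsnn e.1 e.2
      have hde : μ / Real.exp 1 ≤ μ := div_le_self hμpos.le he1
      have hdpos : (0:ℝ) ≤ μ / Real.exp 1 := by positivity
      rw [hc]
      nlinarith [mul_nonneg (mul_nonneg hdpos hsnn') (sub_nonneg.2 hgcard),
        mul_nonneg (mul_nonneg (sub_nonneg.2 hde) hsnn') (Nat.cast_nonneg (G e.1 e.2).card),
        hμe, h1]
  | succ t ih =>
    obtain ⟨ih0, ihg, ihb⟩ := ih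
    have hβt := hβpos t
    have hsge : ∀ i k, (i, k) ∈ E → c * sstar i k ≤ s t i k := by
      intro i k hik
      rw [← hpart] at hik
      rcases Finset.mem_union.1 hik with h | h
      · have h0 : sstar i k = 0 := hs0star (i, k) h
        rw [h0, mul_zero]
        exact ih0 (i, k) (hEgE (i, k) h)
      · exact ihb (i, k) h
    have hwle1 : ∀ i j k, (i, k) ∈ E → (j, k) ∈ E →
        Real.exp (-(β t * (s t i k + s t j k))) ≤ 1 := by
      intro i j k h1 h2
      have h1' := ih0 (i, k) h1
      have h2' := ih0 (j, k) h2
      have hnn : 0 ≤ β t * (s t i k + s t j k) :=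
        mul_nonneg hβt.le (add_nonneg h1' h2')
      calc Real.exp (-(β t * (s t i k + s t j k))) ≤ Real.exp 0 :=
            Real.exp_le_exp.2 (by linarith)
        _ = 1 := Real.exp_zero
    have hwgeG : ∀ i j k, (i, k) ∈ Eg → (j, k) ∈ Eg →
        Real.exp (-1) ≤ Real.exp (-(β t * (s t i k + s t j k))) := by
      intro i j k h1 h2
      apply Real.exp_le_exp.2
      have ha := ihg (i, k) h1
      have hb' := ihg (j, k) h2
      have hPt : (0:ℝ) < 2 * β 0 * r ^ t := by positivity
      rw [le_div_iff₀ hPt] at ha hb'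
      have harg : β t * (s t i k + s t j k) ≤ 1 := by
        rw [hβform t]; linarith
      linarith
    have hDen_ge : ∀ e ∈ E, ((G e.1 e.2).card : ℝ) * Real.exp (-1)
        ≤ ∑ k ∈ N e.1 e.2, Real.exp (-(β t * (s t e.1 k + s t e.2 k))) := by
      intro e he
      calc ((G e.1 e.2).card : ℝ) * Real.exp (-1)
          ≤ ∑ k ∈ G e.1 e.2, Real.exp (-(β t * (s t e.1 k + s t e.2 k))) := by
            have := Finset.card_nsmul_le_sum (G e.1 e.2)
              (fun k => Real.exp (-(β t * (s t e.1 k + s t e.2 k)))) (Real.exp (-1))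
              (fun k hk => hwgeG e.1 e.2 k ((hG _ _ k).1 hk).2.1 ((hG _ _ k).1 hk).2.2)
            simpa [nsmul_eq_mul] using this
        _ ≤ _ := Finset.sum_le_sum_of_subset_of_nonneg (hGN _ _)
            fun k _ _ => (Real.exp_pos _).le
    have hgpos : ∀ e ∈ E, (0:ℝ) < (G e.1 e.2).card := by
      intro e he
      nlinarith [hcardG e he, hnc1 e he]
    have hDenpos : ∀ e ∈ E,
        0 < ∑ k ∈ N e.1 e.2, Real.exp (-(β t * (s t e.1 k + s t e.2 k))) := by
      intro e he
      exact lt_of_lt_of_le (mul_pos (hgpos e he) (Real.exp_pos _)) (hDen_ge e he)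
    refine ⟨?_, ?_, ?_⟩
    · intro e he
      rw [hsrec t e he]
      exact div_nonneg
        (Finset.sum_nonneg fun k _ => mul_nonneg (Real.exp_pos _).le (hd01 _ _ _).1)
        (Finset.sum_nonneg fun k _ => (Real.exp_pos _).le)
    · -- clean edges at t+1
      intro e he
      have heE := hEgE e he
      rw [hsrec t e heE]
      have hbtc : 0 < β t * c := mul_pos hβt hcpos
      have hNum_le : ∑ k ∈ N e.1 e.2, Real.exp (-(β t * (s t e.1 k + s t e.2 k))) * d e.1 e.2 k
          ≤ ((N e.1 e.2 \ G e.1 e.2).card : ℝ) * (Cα / (Real.exp 1 * (β t * c))) := by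
        have hsplit := Finset.sum_sdiff (hGN e.1 e.2)
          (f := fun k => Real.exp (-(β t * (s t e.1 k + s t e.2 k))) * d e.1 e.2 k)
        have hG0 : ∑ k ∈ G e.1 e.2,
            Real.exp (-(β t * (s t e.1 k + s t e.2 k))) * d e.1 e.2 k = 0 :=
          Finset.sum_eq_zero fun k hk => by rw [hdG e he k hk, mul_zero]
        have hBsum : ∑ k ∈ N e.1 e.2 \ G e.1 e.2,
            Real.exp (-(β t * (s t e.1 k + s t e.2 k))) * d e.1 e.2 k
            ≤ ((N e.1 e.2 \ G e.1 e.2).card : ℝ) * (Cα / (Real.exp 1 * (β t * c))) := by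
          calc ∑ k ∈ N e.1 e.2 \ G e.1 e.2,
              Real.exp (-(β t * (s t e.1 k + s t e.2 k))) * d e.1 e.2 k
              ≤ ∑ _k ∈ N e.1 e.2 \ G e.1 e.2, Cα / (Real.exp 1 * (β t * c)) := by
                apply Finset.sum_le_sum
                intro k hk
                have hkN : k ∈ N e.1 e.2 := (Finset.mem_sdiff.1 hk).1
                have hikE : (e.1, k) ∈ E := ((hN e.1 e.2 k).1 hkN).1
                have hjkE : (e.2, k) ∈ E := ((hN e.1 e.2 k).1 hkN).2
                have hd := hdbound e he k hkN
                have hxnn : 0 ≤ sstar e.1 k + sstar e.2 k :=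
                  add_nonneg (hsnn _ _) (hsnn _ _)
                have hw : Real.exp (-(β t * (s t e.1 k + s t e.2 k)))
                    ≤ Real.exp (-(β t * c * (sstar e.1 k + sstar e.2 k))) := by
                  apply Real.exp_le_exp.2
                  have h1 := hsge e.1 k hikE
                  have h2 := hsge e.2 k hjkE
                  have : β t * c * (sstar e.1 k + sstar e.2 k)
                      ≤ β t * (s t e.1 k + s t e.2 k) := by
                    nlinarith [mul_le_mul_of_nonneg_left h1 hβt.le,
                      mul_le_mul_of_nonneg_left h2 hβt.le]
                  linarith
                calc Real.exp (-(β t * (s t e.1 k + s t e.2 k))) * d e.1 e.2 k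
                    ≤ Real.exp (-(β t * c * (sstar e.1 k + sstar e.2 k)))
                      * (Cα * (sstar e.1 k + sstar e.2 k)) :=
                      mul_le_mul hw hd (hd01 _ _ _).1 (Real.exp_pos _).le
                  _ = Cα * ((sstar e.1 k + sstar e.2 k)
                      * Real.exp (-(β t * c * (sstar e.1 k + sstar e.2 k)))) := by ring
                  _ ≤ Cα * (1 / (Real.exp 1 * (β t * c))) :=
                      mul_le_mul_of_nonneg_left
                        (cemp_xexp_le (β t * c) _ hbtc) hCαpos.le
                  _ = Cα / (Real.exp 1 * (β t * c)) := by rw [mul_one_div]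
            _ = _ := by rw [Finset.sum_const, nsmul_eq_mul]
        linarith [hsplit, hG0, hBsum]
      have hbcard : ((N e.1 e.2 \ G e.1 e.2).card : ℝ) ≤ lam * (N e.1 e.2).card := by
        have := hlam e heE; rwa [hB] at this
      have hfinal : (((N e.1 e.2 \ G e.1 e.2).card : ℝ)
            * (Cα / (Real.exp 1 * (β t * c)))) / (((G e.1 e.2).card : ℝ) * (Real.exp 1)⁻¹)
          ≤ 1 / (2 * (r * β t)) := by
        rw [hc]
        exact cemp_core_ineq (Real.exp 1) Cα μ lam r (β t) ((N e.1 e.2).card)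
          ((G e.1 e.2).card) ((N e.1 e.2 \ G e.1 e.2).card)
          hexpos hCαpos hμpos hlampos hlam1 hβt hr1 (hnc1 e heE) (hcardG e heE)
          hbcard hr2'
      have hrt : 1 / (2 * β 0 * r ^ (t + 1)) = 1 / (2 * (r * β t)) := by
        rw [hβform t]; ring_nf
      rw [hrt]
      calc (∑ k ∈ N e.1 e.2, Real.exp (-(β t * (s t e.1 k + s t e.2 k))) * d e.1 e.2 k)
          / (∑ k ∈ N e.1 e.2, Real.exp (-(β t * (s t e.1 k + s t e.2 k))))
          ≤ (((N e.1 e.2 \ G e.1 e.2).card : ℝ) * (Cα / (Real.exp 1 * (β t * c))))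
            / (((G e.1 e.2).card : ℝ) * (Real.exp 1)⁻¹) := by
            apply div_le_div₀ (mul_nonneg (Nat.cast_nonneg _) (div_nonneg hCαpos.le (mul_pos hexpos hbtc).le)) hNum_le
              (mul_pos (hgpos e heE) (by positivity))
            · rw [← Real.exp_neg]
              exact hDen_ge e heE
        _ ≤ 1 / (2 * (r * β t)) := hfinal
    · -- bad edges at t+1
      intro e he
      have heE := hEbE e he
      rw [hsrec t e heE]
      have hncpos : (0:ℝ) < (N e.1 e.2).card := by linarith [hnc1 e heE]
      have hDle : ∑ k ∈ N e.1 e.2, Real.exp (-(β t * (s t e.1 k + s t e.2 k)))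
          ≤ ((N e.1 e.2).card : ℝ) := by
        have := Finset.sum_le_card_nsmul (N e.1 e.2)
          (fun k => Real.exp (-(β t * (s t e.1 k + s t e.2 k)))) 1
          (fun k hk => hwle1 e.1 e.2 k ((hN e.1 e.2 k).1 hk).1 ((hN e.1 e.2 k).1 hk).2)
        simpa [nsmul_eq_mul] using this
      have hNumge : Real.exp (-1) * (μ * ((G e.1 e.2).card : ℝ) * sstar e.1 e.2)
          ≤ ∑ k ∈ N e.1 e.2, Real.exp (-(β t * (s t e.1 k + s t e.2 k))) * d e.1 e.2 k := by
        calc Real.exp (-1) * (μ * ((G e.1 e.2).card : ℝ) * sstar e.1 e.2)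
            ≤ Real.exp (-1) * ∑ k ∈ G e.1 e.2, d e.1 e.2 k :=
              mul_le_mul_of_nonneg_left (hμ e he) (Real.exp_pos _).le
          _ = ∑ k ∈ G e.1 e.2, Real.exp (-1) * d e.1 e.2 k := Finset.mul_sum _ _ _
          _ ≤ ∑ k ∈ G e.1 e.2, Real.exp (-(β t * (s t e.1 k + s t e.2 k))) * d e.1 e.2 k :=
              Finset.sum_le_sum fun k hk =>
                mul_le_mul_of_nonneg_right
                  (hwgeG e.1 e.2 k ((hG _ _ k).1 hk).2.1 ((hG _ _ k).1 hk).2.2)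
                  (hd01 _ _ _).1
          _ ≤ _ := Finset.sum_le_sum_of_subset_of_nonneg (hGN _ _)
              fun k _ _ => mul_nonneg (Real.exp_pos _).le (hd01 _ _ _).1
      rw [le_div_iff₀ (hDenpos e heE)]
      have hsnn' := hsnn e.1 e.2
      have hmid : c * sstar e.1 e.2 * ((N e.1 e.2).card : ℝ)
          ≤ Real.exp (-1) * (μ * ((G e.1 e.2).card : ℝ) * sstar e.1 e.2) := by
        rw [hc, Real.exp_neg]
        have h := mul_le_mul_of_nonneg_left (hcardG e heE)
          (by positivity : (0:ℝ) ≤ μ * (Real.exp 1)⁻¹ * sstar e.1 e.2)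
        calc μ / Real.exp 1 * (1 - lam) * sstar e.1 e.2 * ((N e.1 e.2).card : ℝ)
            = μ * (Real.exp 1)⁻¹ * sstar e.1 e.2 * ((1 - lam) * ((N e.1 e.2).card : ℝ)) := by
              ring
          _ ≤ μ * (Real.exp 1)⁻¹ * sstar e.1 e.2 * ((G e.1 e.2).card : ℝ) := h
          _ = (Real.exp 1)⁻¹ * (μ * ((G e.1 e.2).card : ℝ) * sstar e.1 e.2) := by ring
      calc c * sstar e.1 e.2 * (∑ k ∈ N e.1 e.2, Real.exp (-(β t * (s t e.1 k + s t e.2 k))))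
          ≤ c * sstar e.1 e.2 * ((N e.1 e.2).card : ℝ) :=
            mul_le_mul_of_nonneg_left hDle (mul_nonneg hcpos.le hsnn')
        _ ≤ Real.exp (-1) * (μ * ((G e.1 e.2).card : ℝ) * sstar e.1 e.2) := hmid
        _ ≤ _ := hNumge
end
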